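/- arXiv:1808.08566 — 4 statements merged into one kernel-verified Lean document; each statement's English description precedes it below -/
import Mathlib

section
/- Let T₀, T₁ be contractions on a Hilbert space and let φ be a polynomial of degree at most m. Then φ(T₁) − φ(T₀) = ∑_{ξ,η ∈ Π_m} Υ_m(conj(ξ)T₁)(T₁ − T₀)Υ_m(conj(η)T₀)·(Δφ)(ξ,η), where (Δφ)(ζ,τ) = (φ(ζ)−φ(τ))/(ζ−τ) for ζ ≠ τ and (Δφ)(ζ,ζ) = φ'(ζ). -/
open Complex Polynomial

/-- The divided difference `(Δφ)(z,w)` of a one-variable polynomial. -/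
noncomputable def dividedDiff (φ : Polynomial ℂ) (z w : ℂ) : ℂ :=
  if z = w then (Polynomial.derivative φ).eval z else (φ.eval z - φ.eval w) / (z - w)

/-- `Υ_m(conj(ξ)·T) = (1/m) ∑_{k=0}^{m-1} (conj(ξ) T)^k` for an operator `T`. -/
noncomputable def UpsilonOp {H : Type*} [NormedAddCommGroup H] [NormedSpace ℂ H]
    (m : ℕ) (ξ : ℂ) (T : H →L[ℂ] H) : H →L[ℂ] H :=
  (m : ℂ)⁻¹ • ∑ k ∈ Finset.range m, ((starRingEnd ℂ) ξ • T) ^ k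

-- reindex sum over nthRootsFinset via a primitive root
lemma nthRootsFinset_eq_image {m : ℕ} (hm : 0 < m) {ζ : ℂ} (hζ : IsPrimitiveRoot ζ m) :
    nthRootsFinset m (1 : ℂ) = (Finset.range m).image (ζ ^ ·) := by
  ext x
  simp only [Finset.mem_image, Finset.mem_range, Polynomial.mem_nthRootsFinset hm]
  haveI : NeZero m := ⟨hm.ne'⟩
  constructor
  · intro hx
    obtain ⟨i, hi, rfl⟩ := hζ.eq_pow_of_pow_eq_one hx
    exact ⟨i, hi, rfl⟩
  · rintro ⟨i, hi, rfl⟩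
    rw [← pow_mul, mul_comm, pow_mul, hζ.pow_eq_one, one_pow]

lemma sum_nthRootsFinset_eq {M : Type*} [AddCommMonoid M] {m : ℕ} (hm : 0 < m) {ζ : ℂ}
    (hζ : IsPrimitiveRoot ζ m) (f : ℂ → M) :
    ∑ ξ ∈ nthRootsFinset m (1 : ℂ), f ξ = ∑ i ∈ Finset.range m, f (ζ ^ i) := by
  rw [nthRootsFinset_eq_image hm hζ, Finset.sum_image]
  intro i hi j hj h
  exact hζ.pow_inj (Finset.mem_range.mp hi) (Finset.mem_range.mp hj) h

lemma sum_pow_nthRoots {m : ℕ} (hm : 0 < m) (j : ℕ) :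
    ∑ ξ ∈ nthRootsFinset m (1 : ℂ), ξ ^ j = if m ∣ j then (m : ℂ) else 0 := by
  obtain ⟨ζ, hζ⟩ : ∃ ζ : ℂ, IsPrimitiveRoot ζ m := ⟨_, Complex.isPrimitiveRoot_exp m hm.ne'⟩
  rw [sum_nthRootsFinset_eq hm hζ]
  have hrw : ∀ i, (ζ ^ i) ^ j = (ζ ^ j) ^ i := fun i => by
    rw [← pow_mul, mul_comm, pow_mul]
  rw [Finset.sum_congr rfl fun i _ => hrw i]
  by_cases h : m ∣ j
  · rw [if_pos h, (hζ.pow_eq_one_iff_dvd j).mpr h]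
    simp
  · rw [if_neg h, geom_sum_eq (fun h1 => h ((hζ.pow_eq_one_iff_dvd j).mp h1)) m,
      ← pow_mul, mul_comm j m, pow_mul, hζ.pow_eq_one, one_pow, sub_self, zero_div]

lemma conj_eq_pow {m : ℕ} (hm : 0 < m) {ξ : ℂ} (hξ : ξ ∈ nthRootsFinset m (1 : ℂ)) :
    (starRingEnd ℂ) ξ = ξ ^ (m - 1) := by
  have hpow : ξ ^ m = 1 := (Polynomial.mem_nthRootsFinset hm 1).mp hξ
  have habs : ‖ξ‖ = 1 := Complex.norm_eq_one_of_pow_eq_one hpow hm.ne'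
  rw [← Complex.inv_eq_conj habs]
  apply inv_eq_of_mul_eq_one_right
  rw [← pow_succ', Nat.sub_add_cancel hm, hpow]

lemma orthogonality {m : ℕ} (hm : 0 < m) {a k : ℕ} (ha : a < m) (hk : k < m) :
    ∑ ξ ∈ nthRootsFinset m (1 : ℂ), ξ ^ a * ((starRingEnd ℂ) ξ) ^ k
      = if a = k then (m : ℂ) else 0 := by
  have : ∑ ξ ∈ nthRootsFinset m (1 : ℂ), ξ ^ a * ((starRingEnd ℂ) ξ) ^ k
      = ∑ ξ ∈ nthRootsFinset m (1 : ℂ), ξ ^ (a + (m - 1) * k) := by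
    refine Finset.sum_congr rfl fun ξ hξ => ?_
    rw [conj_eq_pow hm hξ, ← pow_mul, ← pow_add]
  rw [this, sum_pow_nthRoots hm]
  congr 1
  rw [eq_iff_iff]
  constructor
  · intro hdvd
    have h2 : ((a + (m-1) * k : ℕ) : ZMod m) = 0 :=
      (ZMod.natCast_eq_zero_iff _ m).mpr hdvd
    have hm1 : ((m - 1 : ℕ) : ZMod m) = -1 := by
      rw [Nat.cast_sub hm, ZMod.natCast_self, Nat.cast_one, zero_sub]
    rw [Nat.cast_add, Nat.cast_mul, hm1, neg_one_mul, add_neg_eq_zero] at h2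
    have := (ZMod.natCast_eq_natCast_iff a k m).mp h2
    rwa [Nat.ModEq, Nat.mod_eq_of_lt ha, Nat.mod_eq_of_lt hk] at this
  · rintro rfl
    have h1 : (m - 1) * a = m * a - a := Nat.sub_one_mul m a
    have h2 : a ≤ m * a := Nat.le_mul_of_pos_left a hm
    have : a + (m - 1) * a = m * a := by omega
    rw [this]
    exact Dvd.intro a rfl

lemma dividedDiff_X_pow (n : ℕ) (z w : ℂ) :
    dividedDiff (X ^ n) z w = ∑ a ∈ Finset.range n, z ^ a * w ^ (n - 1 - a) := by
  unfold dividedDiff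
  split_ifs with h
  · subst h
    rw [derivative_X_pow, eval_mul, eval_C, eval_pow, eval_X]
    have h1 : ∀ a ∈ Finset.range n, z ^ a * z ^ (n - 1 - a) = z ^ (n - 1) := fun a ha => by
      rw [← pow_add]
      congr 1
      have := Finset.mem_range.mp ha
      omega
    rw [Finset.sum_congr rfl h1, Finset.sum_const, Finset.card_range, nsmul_eq_mul]
  · rw [eval_pow, eval_X, eval_pow, eval_X, div_eq_iff (sub_ne_zero.mpr h)]
    exact (geom_sum₂_mul z w n).symm

lemma dividedDiff_sum {ι : Type*} (s : Finset ι) (f : ι → Polynomial ℂ) (z w : ℂ) :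
    dividedDiff (∑ i ∈ s, f i) z w = ∑ i ∈ s, dividedDiff (f i) z w := by
  unfold dividedDiff
  split_ifs with h
  · rw [map_sum, eval_finset_sum]
  · rw [eval_finset_sum, eval_finset_sum, ← Finset.sum_sub_distrib, Finset.sum_div]

lemma dividedDiff_C_mul (c : ℂ) (φ : Polynomial ℂ) (z w : ℂ) :
    dividedDiff (C c * φ) z w = c * dividedDiff φ z w := by
  unfold dividedDiff
  split_ifs with h
  · rw [derivative_C_mul, eval_mul, eval_C]
  · rw [eval_mul, eval_C, eval_mul, eval_C, ← mul_sub, mul_div_assoc]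

lemma telescope {A : Type*} [Ring A] (x y : A) (n : ℕ) :
    x ^ n - y ^ n = ∑ i ∈ Finset.range n, x ^ i * (x - y) * y ^ (n - 1 - i) := by
  induction n with
  | zero => simp
  | succ n ih =>
    have h1 : ∀ i ∈ Finset.range n, x ^ i * (x - y) * y ^ (n + 1 - 1 - i)
        = x ^ i * (x - y) * y ^ (n - 1 - i) * y := fun i hi => by
      rw [mul_assoc (x ^ i * (x - y)), ← pow_succ]
      congr 2
      have := Finset.mem_range.mp hi
      omega
    rw [Finset.sum_range_succ, Finset.sum_congr rfl h1, ← Finset.sum_mul, ← ih]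
    have h2 : n + 1 - 1 - n = 0 := by omega
    rw [h2, pow_zero, mul_one, pow_succ, pow_succ]
    noncomm_ring

section Op
variable {H : Type*} [NormedAddCommGroup H] [NormedSpace ℂ H]

lemma upsilon_expand (m : ℕ) (ξ : ℂ) (T : H →L[ℂ] H) :
    UpsilonOp m ξ T
      = ∑ k ∈ Finset.range m, ((m : ℂ)⁻¹ * ((starRingEnd ℂ) ξ) ^ k) • T ^ k := by
  unfold UpsilonOp
  rw [Finset.smul_sum]
  exact Finset.sum_congr rfl fun k _ => by rw [_root_.smul_pow, smul_smul]

lemma sum_smul_upsilon {m : ℕ} (hm : 0 < m) {a : ℕ} (ha : a < m) (T : H →L[ℂ] H) :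
    ∑ ξ ∈ nthRootsFinset m (1 : ℂ), ξ ^ a • UpsilonOp m ξ T = T ^ a := by
  have h1 : ∀ ξ ∈ nthRootsFinset m (1 : ℂ), ξ ^ a • UpsilonOp m ξ T
      = ∑ k ∈ Finset.range m,
          ((m : ℂ)⁻¹ * (ξ ^ a * ((starRingEnd ℂ) ξ) ^ k)) • T ^ k := by
    intro ξ _
    rw [upsilon_expand, Finset.smul_sum]
    refine Finset.sum_congr rfl fun k _ => ?_
    rw [smul_smul]
    congr 1
    ring
  rw [Finset.sum_congr rfl h1, Finset.sum_comm]
  have h2 : ∀ k ∈ Finset.range m,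
      (∑ ξ ∈ nthRootsFinset m (1 : ℂ), ((m : ℂ)⁻¹ * (ξ ^ a * ((starRingEnd ℂ) ξ) ^ k)) • T ^ k)
        = (if a = k then T ^ k else 0) := by
    intro k hk
    rw [← Finset.sum_smul, ← Finset.mul_sum, orthogonality hm ha (Finset.mem_range.mp hk)]
    have hm' : (m : ℂ) ≠ 0 := Nat.cast_ne_zero.mpr hm.ne'
    split_ifs
    · rw [inv_mul_cancel₀ hm', one_smul]
    · rw [mul_zero, zero_smul]
  rw [Finset.sum_congr rfl h2, Finset.sum_ite_eq, if_pos (Finset.mem_range.mpr ha)]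

lemma monomial_case {m : ℕ} (hm : 0 < m) {n : ℕ} (hn : n ≤ m) (T₀ T₁ : H →L[ℂ] H) :
    ∑ ξ ∈ nthRootsFinset m (1 : ℂ), ∑ η ∈ nthRootsFinset m (1 : ℂ),
        dividedDiff (X ^ n) ξ η • (UpsilonOp m ξ T₁ * (T₁ - T₀) * UpsilonOp m η T₀)
      = T₁ ^ n - T₀ ^ n := by
  have key : ∀ ξ η : ℂ,
      dividedDiff (X ^ n) ξ η • (UpsilonOp m ξ T₁ * (T₁ - T₀) * UpsilonOp m η T₀)
        = ∑ a ∈ Finset.range n,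
            (ξ ^ a • UpsilonOp m ξ T₁) * (T₁ - T₀)
              * (η ^ (n - 1 - a) • UpsilonOp m η T₀) := by
    intro ξ η
    rw [dividedDiff_X_pow, Finset.sum_smul]
    refine Finset.sum_congr rfl fun a _ => ?_
    simp only [smul_mul_assoc, mul_smul_comm, smul_smul]
    rw [mul_comm]
  rw [Finset.sum_congr rfl fun ξ _ => Finset.sum_congr rfl fun η _ => key ξ η]
  rw [Finset.sum_congr rfl fun ξ _ => Finset.sum_comm, Finset.sum_comm]
  have h3 : ∀ a ∈ Finset.range n,
      (∑ ξ ∈ nthRootsFinset m (1 : ℂ), ∑ η ∈ nthRootsFinset m (1 : ℂ),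
        (ξ ^ a • UpsilonOp m ξ T₁) * (T₁ - T₀) * (η ^ (n - 1 - a) • UpsilonOp m η T₀))
      = T₁ ^ a * (T₁ - T₀) * T₀ ^ (n - 1 - a) := by
    intro a ha
    have han := Finset.mem_range.mp ha
    have ha' : a < m := lt_of_lt_of_le han hn
    have hb' : n - 1 - a < m := by omega
    have inner : ∀ ξ ∈ nthRootsFinset m (1 : ℂ),
        (∑ η ∈ nthRootsFinset m (1 : ℂ),
          (ξ ^ a • UpsilonOp m ξ T₁) * (T₁ - T₀) * (η ^ (n - 1 - a) • UpsilonOp m η T₀))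
        = (ξ ^ a • UpsilonOp m ξ T₁) * (T₁ - T₀) * T₀ ^ (n - 1 - a) := by
      intro ξ _
      rw [← Finset.mul_sum, sum_smul_upsilon hm hb' T₀]
    rw [Finset.sum_congr rfl inner, ← Finset.sum_mul, ← Finset.sum_mul,
      sum_smul_upsilon hm ha' T₁]
  rw [Finset.sum_congr rfl h3]
  exact (telescope T₁ T₀ n).symm

end Op

/-- for contractions `T₀, T₁` and a polynomial `φ` of degree at most `m`,
`φ(T₁) − φ(T₀) = ∑_{ξ,η ∈ Π_m} Υ_m(conj(ξ)T₁)(T₁−T₀)Υ_m(conj(η)T₀)·(Δφ)(ξ,η)`. -/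
theorem poly_diff_eq_sum_nthRoots {H : Type*} [NormedAddCommGroup H]
    [InnerProductSpace ℂ H] [CompleteSpace H]
    (m : ℕ) (hm : 0 < m) (T₀ T₁ : H →L[ℂ] H) (hT₀ : ‖T₀‖ ≤ 1) (hT₁ : ‖T₁‖ ≤ 1)
    (φ : Polynomial ℂ) (hφ : φ.natDegree ≤ m) :
    Polynomial.aeval T₁ φ - Polynomial.aeval T₀ φ =
      ∑ ξ ∈ Polynomial.nthRootsFinset m (1 : ℂ), ∑ η ∈ Polynomial.nthRootsFinset m (1 : ℂ),
        dividedDiff φ ξ η • (UpsilonOp m ξ T₁ * (T₁ - T₀) * UpsilonOp m η T₀) := by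
  have hdeg : φ.natDegree < m + 1 := Nat.lt_succ_of_le hφ
  have hφeq := Polynomial.as_sum_range' φ (m + 1) hdeg
  have hdd : ∀ ξ η : ℂ, dividedDiff φ ξ η
      = ∑ n ∈ Finset.range (m + 1), φ.coeff n * dividedDiff (X ^ n) ξ η := by
    intro ξ η
    conv_lhs => rw [hφeq]
    rw [dividedDiff_sum]
    refine Finset.sum_congr rfl fun n _ => ?_
    rw [← Polynomial.C_mul_X_pow_eq_monomial, dividedDiff_C_mul]
  conv_lhs => rw [hφeq]
  rw [map_sum, map_sum, ← Finset.sum_sub_distrib]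
  have hL : ∀ n ∈ Finset.range (m + 1),
      ((aeval T₁ (monomial n (φ.coeff n)) : H →L[ℂ] H)
        - aeval T₀ (monomial n (φ.coeff n)))
      = φ.coeff n • (T₁ ^ n - T₀ ^ n) := by
    intro n _
    rw [aeval_monomial, aeval_monomial, smul_sub, Algebra.smul_def, Algebra.smul_def]
  rw [Finset.sum_congr rfl hL]
  rw [Finset.sum_congr rfl fun ξ (_ : ξ ∈ nthRootsFinset m (1 : ℂ)) =>
    Finset.sum_congr rfl fun η (_ : η ∈ nthRootsFinset m (1 : ℂ)) => by
      rw [hdd ξ η, Finset.sum_smul]]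
  rw [Finset.sum_congr rfl fun ξ (_ : ξ ∈ nthRootsFinset m (1 : ℂ)) => Finset.sum_comm,
    Finset.sum_comm]
  refine Finset.sum_congr rfl fun n hn => ?_
  have hnm : n ≤ m := Nat.lt_succ_iff.mp (Finset.mem_range.mp hn)
  rw [← monomial_case hm hnm T₀ T₁, Finset.smul_sum]
  refine Finset.sum_congr rfl fun ξ _ => ?_
  rw [Finset.smul_sum]
  refine Finset.sum_congr rfl fun η _ => ?_
  rw [smul_smul]
end

section
/- Let f be a polynomial in two variables of degree at most m in each variable. Then for all unimodular ζ₁, ζ₂, τ, the divided difference in the first variable satisfies the interpolation identity (Δ^{[1]}f)(ζ₁,ζ₂,τ) = ∑_{ξ,η ∈ Π_m} Υ_m(ζ₁ conj(ξ)) Υ_m(ζ₂ conj(η)) (Δ^{[1]}f)(ξ,η,τ). -/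
open Complex Polynomial

/-- `Υ_m(z) = (1/m) ∑_{k=0}^{m-1} z^k`. -/
noncomputable def Upsilon (m : ℕ) (z : ℂ) : ℂ :=
  (m : ℂ)⁻¹ * ∑ k ∈ Finset.range m, z ^ k

/-- The one-variable polynomial `z ↦ ∑_{j=0}^m a_{jk} z^j` (the `k`-th "column" of `f`). -/
noncomputable def colPoly (m : ℕ) (a : ℕ → ℕ → ℂ) (k : ℕ) : Polynomial ℂ :=
  ∑ j ∈ Finset.range (m + 1), Polynomial.C (a j k) * Polynomial.X ^ j

/-- The divided difference of `f(z₁,z₂) = ∑_{j,k=0}^{m} a_{jk} z₁^j z₂^k` in the first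
variable: `(Δ^{[1]}f)(ζ₁,ζ₂,τ)`. -/
noncomputable def dividedDiff1 (m : ℕ) (a : ℕ → ℕ → ℂ) (ζ₁ ζ₂ τ : ℂ) : ℂ :=
  ∑ k ∈ Finset.range (m + 1), dividedDiff (colPoly m a k) ζ₁ ζ₂ * τ ^ k

open Finset in

lemma sum_zpow_nthRoots (m : ℕ) (hm : 0 < m) (n : ℤ) :
    ∑ ξ ∈ Polynomial.nthRootsFinset m (1 : ℂ), ξ ^ n = if (m:ℤ) ∣ n then (m:ℂ) else 0 := by
  have hω : IsPrimitiveRoot (Complex.exp (2 * Real.pi * Complex.I / m)) m :=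
    Complex.isPrimitiveRoot_exp m hm.ne'
  set ω := Complex.exp (2 * Real.pi * Complex.I / m)
  have himg : Polynomial.nthRootsFinset m (1 : ℂ) = (Finset.range m).image (ω ^ ·) := by
    rw [Polynomial.nthRootsFinset_def, hω.nthRoots_eq (one_pow m)]
    ext x
    simp [Multiset.mem_toFinset, Finset.mem_image]
  rw [himg, Finset.sum_image (fun i hi j hj h => hω.injOn_pow (by simpa using hi) (by simpa using hj) h)]
  have hrw : ∀ i ∈ Finset.range m, (ω ^ i : ℂ) ^ n = (ω ^ n) ^ i := by
    intro i _
    rw [← zpow_natCast ω i, ← zpow_mul, mul_comm, zpow_mul, zpow_natCast]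
  rw [Finset.sum_congr rfl hrw]
  by_cases hd : (m : ℤ) ∣ n
  · rw [if_pos hd, (hω.zpow_eq_one_iff_dvd n).2 hd]
    simp
  · rw [if_neg hd]
    have h1 : (ω ^ n : ℂ) ≠ 1 := fun h => hd ((hω.zpow_eq_one_iff_dvd n).1 h)
    rw [geom_sum_eq h1 m]
    have : (ω ^ n : ℂ) ^ m = 1 := by
      rw [← zpow_natCast, ← zpow_mul, mul_comm, zpow_mul, hω.zpow_eq_one, one_zpow]
    rw [this, sub_self, zero_div]


lemma upsilon_interp (m : ℕ) (hm : 0 < m) (ζ : ℂ) (p : ℕ) (hp : p < m) :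
    ∑ ξ ∈ Polynomial.nthRootsFinset m (1 : ℂ), Upsilon m (ζ * (starRingEnd ℂ) ξ) * ξ ^ p = ζ ^ p := by
  have key : ∀ ξ ∈ Polynomial.nthRootsFinset m (1 : ℂ),
      Upsilon m (ζ * (starRingEnd ℂ) ξ) * ξ ^ p
        = (m:ℂ)⁻¹ * ∑ k ∈ Finset.range m, ζ ^ k * ξ ^ ((p : ℤ) - k) := by
    intro ξ hξ
    have hξ1 : ξ ^ m = 1 := (Polynomial.mem_nthRootsFinset hm (1 : ℂ)).1 hξ
    have hξ0 : ξ ≠ 0 := by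
      intro h; rw [h, zero_pow hm.ne'] at hξ1; exact zero_ne_one hξ1
    have hconj : (starRingEnd ℂ) ξ = ξ⁻¹ :=
      (Complex.inv_eq_conj (Complex.norm_eq_one_of_pow_eq_one hξ1 hm.ne')).symm
    rw [hconj, Upsilon, mul_assoc, Finset.sum_mul]
    congr 1
    apply Finset.sum_congr rfl
    intro k _
    rw [mul_pow, inv_pow, ← zpow_natCast ξ k, ← zpow_neg, ← zpow_natCast ξ p,
      mul_assoc, ← zpow_add₀ hξ0, sub_eq_neg_add]
  rw [Finset.sum_congr rfl key, ← Finset.mul_sum, Finset.sum_comm]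
  have : ∀ k ∈ Finset.range m, ∑ ξ ∈ Polynomial.nthRootsFinset m (1 : ℂ), ζ ^ k * ξ ^ ((p:ℤ) - k)
      = ζ ^ k * (if (m:ℤ) ∣ ((p:ℤ) - k) then (m:ℂ) else 0) := by
    intro k _
    rw [← Finset.mul_sum, sum_zpow_nthRoots m hm]
  rw [Finset.sum_congr rfl this, Finset.sum_eq_single p]
  · rw [if_pos (by simp)]
    have hm' : (m:ℂ) ≠ 0 := by exact_mod_cast hm.ne'
    field_simp
  · intro k hk hkp
    rw [if_neg, mul_zero]
    intro hdvd
    have := Int.eq_zero_of_abs_lt_dvd hdvd (by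
      rw [Finset.mem_range] at hk
      rw [abs_lt]; omega)
    omega
  · intro h; exact absurd (Finset.mem_range.2 hp) h




lemma interp_lin (m : ℕ) (hm : 0 < m) (ζ : ℂ) (g : ℕ → ℂ) :
    ∑ ξ ∈ Polynomial.nthRootsFinset m (1 : ℂ),
      Upsilon m (ζ * (starRingEnd ℂ) ξ) * (∑ p ∈ Finset.range m, g p * ξ ^ p)
      = ∑ p ∈ Finset.range m, g p * ζ ^ p := by
  have : ∀ ξ ∈ Polynomial.nthRootsFinset m (1 : ℂ),
      Upsilon m (ζ * (starRingEnd ℂ) ξ) * (∑ p ∈ Finset.range m, g p * ξ ^ p)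
        = ∑ p ∈ Finset.range m, g p * (Upsilon m (ζ * (starRingEnd ℂ) ξ) * ξ ^ p) := by
    intro ξ _
    rw [Finset.mul_sum]
    exact Finset.sum_congr rfl fun p _ => by ring
  rw [Finset.sum_congr rfl this, Finset.sum_comm]
  apply Finset.sum_congr rfl
  intro p hp
  rw [← Finset.mul_sum, upsilon_interp m hm ζ p (Finset.mem_range.1 hp)]

lemma dividedDiff_symm (φ : Polynomial ℂ) (z w : ℂ) : dividedDiff φ z w = dividedDiff φ w z := by
  unfold dividedDiff
  rcases eq_or_ne z w with rfl | h
  · simp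
  · rw [if_neg h, if_neg (Ne.symm h), div_eq_div_iff (sub_ne_zero.2 h) (sub_ne_zero.2 (Ne.symm h))]
    ring

lemma dividedDiff_colPoly (m : ℕ) (a : ℕ → ℕ → ℂ) (k : ℕ) (z w : ℂ) :
    dividedDiff (colPoly m a k) z w
      = ∑ j ∈ Finset.range (m+1), a j k * ∑ i ∈ Finset.range j, z ^ i * w ^ (j-1-i) := by
  unfold dividedDiff colPoly
  rcases eq_or_ne z w with rfl | h
  · rw [if_pos rfl]
    rw [map_sum, Polynomial.eval_finset_sum]
    apply Finset.sum_congr rfl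
    intro j _
    rw [Polynomial.derivative_C_mul_X_pow, Polynomial.eval_mul, Polynomial.eval_C,
      Polynomial.eval_pow, Polynomial.eval_X]
    have : ∀ i ∈ Finset.range j, z ^ i * z ^ (j-1-i) = z ^ (j-1) := by
      intro i hi
      rw [← pow_add]
      congr 1
      have := Finset.mem_range.1 hi
      omega
    rw [Finset.sum_congr rfl this, Finset.sum_const, Finset.card_range, nsmul_eq_mul]
    ring
  · rw [if_neg h, div_eq_iff (sub_ne_zero.2 h), Finset.sum_mul]
    rw [Polynomial.eval_finset_sum, Polynomial.eval_finset_sum, ← Finset.sum_sub_distrib]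
    apply Finset.sum_congr rfl
    intro j _
    rw [mul_assoc, geom_sum₂_mul]
    simp [mul_sub]

lemma comm3 {s t u : Finset ℕ} (f : ℕ → ℕ → ℕ → ℂ) :
    ∑ k ∈ s, ∑ j ∈ t, ∑ i ∈ u, f k j i = ∑ i ∈ u, ∑ k ∈ s, ∑ j ∈ t, f k j i := by
  rw [show (∑ k ∈ s, ∑ j ∈ t, ∑ i ∈ u, f k j i) = ∑ k ∈ s, ∑ i ∈ u, ∑ j ∈ t, f k j i
    from Finset.sum_congr rfl fun k _ => Finset.sum_comm, Finset.sum_comm]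

lemma dd1_as_poly (m : ℕ) (a : ℕ → ℕ → ℂ) (z w τ : ℂ) :
    dividedDiff1 m a z w τ
      = ∑ i ∈ Finset.range m, (∑ k ∈ Finset.range (m+1), ∑ j ∈ Finset.range (m+1),
          (if i < j then a j k * τ^k * w^(j-1-i) else 0)) * z ^ i := by
  have hS : ∀ j ∈ Finset.range (m+1), ∑ i ∈ Finset.range j, z^i * w^(j-1-i)
      = ∑ i ∈ Finset.range m, if i < j then z^i * w^(j-1-i) else 0 := by
    intro j hj
    rw [← Finset.sum_filter]
    apply Finset.sum_congr _ (fun _ _ => rfl)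
    ext i
    simp only [Finset.mem_range, Finset.mem_filter]
    have := Finset.mem_range.1 hj
    omega
  calc dividedDiff1 m a z w τ
      = ∑ k ∈ Finset.range (m+1), ∑ j ∈ Finset.range (m+1), ∑ i ∈ Finset.range m,
          (if i < j then a j k * τ^k * w^(j-1-i) else 0) * z^i := by
        unfold dividedDiff1
        apply Finset.sum_congr rfl
        intro k _
        rw [dividedDiff_colPoly, Finset.sum_mul]
        apply Finset.sum_congr rfl
        intro j hj
        rw [hS j hj, Finset.mul_sum, Finset.sum_mul]
        apply Finset.sum_congr rfl
        intro i _
        split_ifs with h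
        · ring
        · simp
    _ = ∑ i ∈ Finset.range m, ∑ k ∈ Finset.range (m+1), ∑ j ∈ Finset.range (m+1),
          (if i < j then a j k * τ^k * w^(j-1-i) else 0) * z^i := comm3 _
    _ = _ := by
        apply Finset.sum_congr rfl
        intro i _
        rw [Finset.sum_mul]
        apply Finset.sum_congr rfl
        intro k _
        rw [Finset.sum_mul]

lemma dd1_symm (m : ℕ) (a : ℕ → ℕ → ℂ) (z w τ : ℂ) :
    dividedDiff1 m a z w τ = dividedDiff1 m a w z τ := by
  unfold dividedDiff1
  exact Finset.sum_congr rfl fun k _ => by rw [dividedDiff_symm]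

/-- for `f` of degree at most `m` in each variable and unimodular `ζ₁, ζ₂, τ`,
`(Δ^{[1]}f)(ζ₁,ζ₂,τ) = ∑_{ξ,η ∈ Π_m} Υ_m(ζ₁ conj ξ) Υ_m(ζ₂ conj η) (Δ^{[1]}f)(ξ,η,τ)`. -/
theorem dividedDiff1_interpolation (m : ℕ) (hm : 0 < m) (a : ℕ → ℕ → ℂ) (ζ₁ ζ₂ τ : ℂ)
    (hζ₁ : ‖ζ₁‖ = 1) (hζ₂ : ‖ζ₂‖ = 1) (hτ : ‖τ‖ = 1) :
    dividedDiff1 m a ζ₁ ζ₂ τ =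
      ∑ ξ ∈ Polynomial.nthRootsFinset m (1 : ℂ), ∑ η ∈ Polynomial.nthRootsFinset m (1 : ℂ),
        Upsilon m (ζ₁ * (starRingEnd ℂ) ξ) * Upsilon m (ζ₂ * (starRingEnd ℂ) η) *
          dividedDiff1 m a ξ η τ := by
  have one_var : ∀ (ζ w : ℂ), dividedDiff1 m a ζ w τ
      = ∑ ξ ∈ Polynomial.nthRootsFinset m (1 : ℂ),
          Upsilon m (ζ * (starRingEnd ℂ) ξ) * dividedDiff1 m a ξ w τ := by
    intro ζ w
    rw [dd1_as_poly m a ζ w τ, ← interp_lin m hm ζ _]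
    exact Finset.sum_congr rfl fun ξ _ => by rw [dd1_as_poly m a ξ w τ]
  rw [one_var ζ₁ ζ₂]
  apply Finset.sum_congr rfl
  intro ξ _
  rw [dd1_symm, one_var ζ₂ ξ, Finset.mul_sum]
  apply Finset.sum_congr rfl
  intro η _
  rw [dd1_symm m a η ξ τ]
  ring
end

section
/- Let K be an analytic polynomial in two variables of degree less than m in each variable, and let I_K be the integral operator on L²(𝕋) with kernel K, (I_K φ)(ζ) = ∫_𝕋 K(ζ,τ)φ(τ) dm(τ). Then the operator norm of the m×m matrix {K(ξ,η)}_{ξ,η ∈ Π_m} (acting on Euclidean ℂ^m) equals m times the operator norm of I_K on L²(𝕋). -/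
open Complex MeasureTheory AddCircle Finset

instance : Fact (0 < 2 * Real.pi) := ⟨by positivity⟩

noncomputable section AuxLemmas



/-- coercion of a finite sum in Lp -/
lemma my_coeFn_finset_sum {α E : Type*} {mα : MeasurableSpace α} {μ : Measure α}
    [NormedAddCommGroup E] {p : ENNReal} {ι : Type*} (s : Finset ι) (g : ι → Lp E p μ) :
    ⇑(∑ i ∈ s, g i) =ᵐ[μ] fun x => ∑ i ∈ s, g i x := by
  classical
  induction s using Finset.induction_on with
  | empty => simp only [Finset.sum_empty]; exact Lp.coeFn_zero E p μ
  | @insert a s ha ih =>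
      rw [Finset.sum_insert ha]
      filter_upwards [Lp.coeFn_add (g a) (∑ i ∈ s, g i), ih] with x h1 h2
      rw [h1, Pi.add_apply, Finset.sum_insert ha, h2]

/-- norm of an orthonormal combination -/
lemma my_norm_comb {H : Type*} [NormedAddCommGroup H] [InnerProductSpace ℂ H]
    {m : ℕ} {e : Fin m → H} (he : Orthonormal ℂ e) (l : Fin m → ℂ) :
    ‖∑ j, l j • e j‖ ^ 2 = ∑ j, ‖l j‖ ^ 2 := by
  rw [← inner_self_eq_norm_sq (𝕜 := ℂ), he.inner_sum l l Finset.univ, map_sum]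
  refine Finset.sum_congr rfl fun j _ => ?_
  simp [RCLike.conj_mul, ← Complex.ofReal_pow]

lemma my_T_apply {m : ℕ} (c : Fin m → Fin m → ℂ) (x : EuclideanSpace ℂ (Fin m)) (j : Fin m) :
    (Matrix.toEuclideanCLM (𝕜 := ℂ) (Matrix.of c) x) j = ∑ k, c j k * x k := by
  have h := congrFun (Matrix.ofLp_toEuclideanCLM (𝕜 := ℂ) (Matrix.of c) x) j
  simpa [Matrix.toLin'_apply, Matrix.mulVec, dotProduct] using h

lemma my_T_norm {m : ℕ} (c : Fin m → Fin m → ℂ) (x : EuclideanSpace ℂ (Fin m)) :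
    ‖Matrix.toEuclideanCLM (𝕜 := ℂ) (Matrix.of c) x‖ ^ 2 = ∑ j, ‖∑ k, c j k * x k‖ ^ 2 := by
  rw [EuclideanSpace.norm_eq, Real.sq_sqrt (by positivity)]
  exact Finset.sum_congr rfl fun j _ => by rw [my_T_apply]

lemma my_eucl_norm_sq {m : ℕ} (x : EuclideanSpace ℂ (Fin m)) :
    ‖x‖ ^ 2 = ∑ k, ‖x k‖ ^ 2 := by
  rw [EuclideanSpace.norm_eq, Real.sq_sqrt (by positivity)]





lemma sq_eq_norms {a b : ℝ} (ha : 0 ≤ a) (hb : 0 ≤ b) (h : a ^ 2 = b ^ 2) : a = b := by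
  have := congrArg Real.sqrt h
  rwa [Real.sqrt_sq ha, Real.sqrt_sq hb] at this

/-- abstract: operator given by an orthonormal-coefficient matrix has norm equal to matrix norm -/
lemma my_opnorm_eq {H : Type*} [NormedAddCommGroup H] [InnerProductSpace ℂ H]
    {m : ℕ} {e f : Fin m → H} (he : Orthonormal ℂ e) (hf : Orthonormal ℂ f)
    (c : Fin m → Fin m → ℂ) (A : H →L[ℂ] H)
    (hA : ∀ φ, A φ = ∑ j, (∑ k, c j k * (inner ℂ (f k) φ : ℂ)) • e j) :
    ‖A‖ = ‖Matrix.toEuclideanCLM (𝕜 := ℂ) (Matrix.of c)‖ := by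
  set T := Matrix.toEuclideanCLM (𝕜 := ℂ) (Matrix.of c) with hT
  refine le_antisymm ?_ ?_
  · refine A.opNorm_le_bound (norm_nonneg T) fun φ => ?_
    set y : EuclideanSpace ℂ (Fin m) := (WithLp.equiv 2 _).symm (fun k => (inner ℂ (f k) φ : ℂ))
      with hy
    have hyk : ∀ k, y k = (inner ℂ (f k) φ : ℂ) := fun k => rfl
    have hAφ : A φ = ∑ j, (∑ k, c j k * y k) • e j := by
      rw [hA]
      exact Finset.sum_congr rfl fun j _ => by
        rw [show (∑ k, c j k * (inner ℂ (f k) φ : ℂ)) = ∑ k, c j k * y k from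
          Finset.sum_congr rfl fun k _ => by rw [hyk]]
    have h1 : ‖A φ‖ = ‖T y‖ := by
      refine sq_eq_norms (norm_nonneg _) (norm_nonneg _) ?_
      rw [hAφ, my_norm_comb he, hT, my_T_norm]
    have h3 : ‖y‖ ≤ ‖φ‖ := by
      have hb : ‖y‖ ^ 2 ≤ ‖φ‖ ^ 2 := by
        rw [my_eucl_norm_sq]
        simpa [hyk] using hf.sum_inner_products_le (s := Finset.univ) φ
      calc ‖y‖ = Real.sqrt (‖y‖ ^ 2) := (Real.sqrt_sq (norm_nonneg _)).symm
        _ ≤ Real.sqrt (‖φ‖ ^ 2) := Real.sqrt_le_sqrt hb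
        _ = ‖φ‖ := Real.sqrt_sq (norm_nonneg _)
    calc ‖A φ‖ = ‖T y‖ := h1
      _ ≤ ‖T‖ * ‖y‖ := T.le_opNorm y
      _ ≤ ‖T‖ * ‖φ‖ := mul_le_mul_of_nonneg_left h3 (norm_nonneg _)
  · refine T.opNorm_le_bound (norm_nonneg A) fun x => ?_
    set φ := ∑ k, (x k) • f k with hφ
    have hins : ∀ k, (inner ℂ (f k) φ : ℂ) = x k := fun k => hf.inner_right_fintype _ k
    have hAφ : A φ = ∑ j, (∑ k, c j k * x k) • e j := by
      rw [hA]
      exact Finset.sum_congr rfl fun j _ => by rw [show (∑ k, c j k * (inner ℂ (f k) φ : ℂ))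
        = ∑ k, c j k * x k from Finset.sum_congr rfl fun k _ => by rw [hins]]
    have h1 : ‖A φ‖ = ‖T x‖ := by
      refine sq_eq_norms (norm_nonneg _) (norm_nonneg _) ?_
      rw [hAφ, my_norm_comb he, hT, my_T_norm]
    have h2 : ‖φ‖ = ‖x‖ := by
      refine sq_eq_norms (norm_nonneg _) (norm_nonneg _) ?_
      rw [hφ, my_norm_comb hf, my_eucl_norm_sq]
    calc ‖T x‖ = ‖A φ‖ := h1.symm
      _ ≤ ‖A‖ * ‖φ‖ := A.le_opNorm φ
      _ = ‖A‖ * ‖x‖ := by rw [h2]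



lemma my_A_apply (m : ℕ) (c : ℕ → ℕ → ℂ)
    (A : Lp ℂ 2 (haarAddCircle (T := 2 * Real.pi)) →L[ℂ]
         Lp ℂ 2 (haarAddCircle (T := 2 * Real.pi)))
    (hA : ∀ φ : Lp ℂ 2 (haarAddCircle (T := 2 * Real.pi)),
      A φ =ᵐ[haarAddCircle] fun x : AddCircle (2 * Real.pi) =>
        ∫ y : AddCircle (2 * Real.pi),
          (∑ j ∈ range m, ∑ k ∈ range m, c j k * fourier j x * fourier k y) * φ y
          ∂haarAddCircle)
    (φ : Lp ℂ 2 (haarAddCircle (T := 2 * Real.pi))) :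
    A φ = ∑ j : Fin m, (∑ k : Fin m,
      c j k * (inner ℂ (fourierLp 2 (-(k : ℕ) : ℤ)) φ : ℂ)) • fourierLp 2 ((j : ℕ) : ℤ) := by
  -- integrability of each fourier k * φ
  have hint : ∀ k : ℕ, Integrable (fun y : AddCircle (2 * Real.pi) =>
      fourier (k : ℤ) y * φ y) (haarAddCircle (T := 2 * Real.pi)) := by
    intro k
    have h0 := L2.integrable_inner (𝕜 := ℂ) (fourierLp (T := 2 * Real.pi) 2 (-(k : ℤ))) φ
    refine h0.congr ?_
    filter_upwards [coeFn_fourierLp (T := 2 * Real.pi) 2 (-(k : ℤ))] with y hy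
    rw [RCLike.inner_apply, hy, fourier_neg]
    simp [mul_comm]
  -- the inner products as integrals
  have hwk : ∀ k : ℕ, (inner ℂ (fourierLp (T := 2 * Real.pi) 2 (-(k : ℤ))) φ : ℂ)
      = ∫ y, fourier (k : ℤ) y * φ y ∂(haarAddCircle (T := 2 * Real.pi)) := by
    intro k
    rw [L2.inner_def]
    refine integral_congr_ae ?_
    filter_upwards [coeFn_fourierLp (T := 2 * Real.pi) 2 (-(k : ℤ))] with y hy
    rw [RCLike.inner_apply, hy, fourier_neg]
    simp [mul_comm]
  -- pointwise computation of the integral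
  have hL : ∀ x : AddCircle (2 * Real.pi),
      (∫ y, (∑ j ∈ range m, ∑ k ∈ range m, c j k * fourier j x * fourier k y) * φ y
          ∂(haarAddCircle (T := 2 * Real.pi)))
        = ∑ j : Fin m, (∑ k : Fin m, c (j : ℕ) (k : ℕ)
            * (inner ℂ (fourierLp 2 (-((k : ℕ) : ℤ))) φ : ℂ)) * fourier ((j : ℕ) : ℤ) x := by
    intro x
    have hrw : (fun y : AddCircle (2 * Real.pi) =>
        (∑ j ∈ range m, ∑ k ∈ range m, c j k * fourier j x * fourier k y) * φ y)
        = fun y => ∑ j ∈ range m, ∑ k ∈ range m,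
            (c j k * fourier j x) * (fourier (k : ℤ) y * φ y) := by
      funext y
      rw [Finset.sum_mul]
      refine Finset.sum_congr rfl fun j _ => ?_
      rw [Finset.sum_mul]
      exact Finset.sum_congr rfl fun k _ => by ring
    rw [hrw, integral_finset_sum _ (fun j _ => integrable_finset_sum _
      (fun k _ => ((hint k).const_mul _)))]
    have hstep : ∀ j ∈ range m,
        (∫ y, ∑ k ∈ range m, (c j k * fourier (j : ℤ) x) * (fourier (k : ℤ) y * φ y)
            ∂(haarAddCircle (T := 2 * Real.pi)))
          = ∑ k ∈ range m, (c j k * fourier (j : ℤ) x)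
              * (inner ℂ (fourierLp 2 (-(k : ℤ))) φ : ℂ) := by
      intro j _
      rw [integral_finset_sum _ (fun k _ => ((hint k).const_mul _))]
      exact Finset.sum_congr rfl fun k _ => by
        rw [MeasureTheory.integral_const_mul, hwk k]
    rw [Finset.sum_congr rfl hstep]
    rw [← Fin.sum_univ_eq_sum_range (fun j => ∑ k ∈ range m,
      (c j k * fourier (j : ℤ) x) * (inner ℂ (fourierLp 2 (-(k : ℤ))) φ : ℂ)) m]
    refine Finset.sum_congr rfl fun j _ => ?_
    rw [← Fin.sum_univ_eq_sum_range (fun k => (c (j : ℕ) k * fourier ((j : ℕ) : ℤ) x)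
      * (inner ℂ (fourierLp 2 (-(k : ℤ))) φ : ℂ)) m]
    rw [Finset.sum_mul]
    exact Finset.sum_congr rfl fun k _ => by ring
  -- coercion of the RHS
  have hR : ⇑(∑ j : Fin m, (∑ k : Fin m, c (j : ℕ) (k : ℕ)
        * (inner ℂ (fourierLp 2 (-((k : ℕ) : ℤ))) φ : ℂ)) • fourierLp
        (T := 2 * Real.pi) 2 ((j : ℕ) : ℤ))
      =ᵐ[haarAddCircle (T := 2 * Real.pi)] fun x => ∑ j : Fin m,
        (∑ k : Fin m, c (j : ℕ) (k : ℕ) * (inner ℂ (fourierLp 2 (-((k : ℕ) : ℤ))) φ : ℂ))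
        * fourier ((j : ℕ) : ℤ) x := by
    have hj : ∀ j : Fin m,
        ⇑((∑ k : Fin m, c (j : ℕ) (k : ℕ) * (inner ℂ (fourierLp 2 (-((k : ℕ) : ℤ))) φ : ℂ))
            • fourierLp (T := 2 * Real.pi) 2 ((j : ℕ) : ℤ))
          =ᵐ[haarAddCircle (T := 2 * Real.pi)] fun x =>
            (∑ k : Fin m, c (j : ℕ) (k : ℕ) * (inner ℂ (fourierLp 2 (-((k : ℕ) : ℤ))) φ : ℂ))
            * fourier ((j : ℕ) : ℤ) x := by
      intro j
      filter_upwards [Lp.coeFn_smul (∑ k : Fin m, c (j : ℕ) (k : ℕ)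
          * (inner ℂ (fourierLp 2 (-((k : ℕ) : ℤ))) φ : ℂ))
        (fourierLp (T := 2 * Real.pi) 2 ((j : ℕ) : ℤ)),
        coeFn_fourierLp (T := 2 * Real.pi) 2 ((j : ℕ) : ℤ)] with x h1 h2
      rw [h1, Pi.smul_apply, h2, smul_eq_mul]
    have hall := (Filter.eventually_all (ι := Fin m)).2 hj
    filter_upwards [my_coeFn_finset_sum Finset.univ
      (fun j : Fin m => (∑ k : Fin m, c (j : ℕ) (k : ℕ)
        * (inner ℂ (fourierLp 2 (-((k : ℕ) : ℤ))) φ : ℂ)) • fourierLp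
        (T := 2 * Real.pi) 2 ((j : ℕ) : ℤ)), hall] with x h1 h2
    rw [h1]
    exact Finset.sum_congr rfl fun j _ => h2 j
  refine Lp.ext ?_
  filter_upwards [hA φ, hR] with x h1 h2
  rw [h1, hL x, ← h2]

lemma my_root_sum {z : ℂ} {m : ℕ} (hm : 0 < m) (hz : z ^ m = 1) :
    ∑ i ∈ range m, z ^ i = if z = 1 then (m : ℂ) else 0 := by
  split_ifs with h
  · simp [h]
  · rw [geom_sum_eq h, hz, sub_self, zero_div]


section DFT
variable (m : ℕ)

/-- the DFT matrix -/
def Fmat (m : ℕ) : Matrix (Fin m) (Fin m) ℂ :=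
  Matrix.of fun i j : Fin m => Complex.exp (2 * Real.pi * Complex.I / m) ^ ((i : ℕ) * (j : ℕ))

lemma omega_prim (hm : 0 < m) :
    IsPrimitiveRoot (Complex.exp (2 * Real.pi * Complex.I / m)) m :=
  Complex.isPrimitiveRoot_exp m hm.ne'

lemma omega_ne_zero : Complex.exp (2 * Real.pi * Complex.I / m) ≠ 0 := Complex.exp_ne_zero _

lemma omega_pow_eq_iff (hm : 0 < m) (a b : Fin m) :
    Complex.exp (2 * Real.pi * Complex.I / m) ^ (a : ℕ)
      = Complex.exp (2 * Real.pi * Complex.I / m) ^ (b : ℕ) ↔ a = b := by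
  constructor
  · intro h
    exact Fin.ext ((omega_prim m hm).pow_inj a.is_lt b.is_lt h)
  · rintro rfl; rfl

lemma omega_norm_one (hm : 0 < m) : ‖Complex.exp (2 * Real.pi * Complex.I / m)‖ = 1 :=
  Complex.norm_eq_one_of_pow_eq_one (omega_prim m hm).pow_eq_one hm.ne'

lemma conj_omega_pow (hm : 0 < m) (n : ℕ) :
    (starRingEnd ℂ) (Complex.exp (2 * Real.pi * Complex.I / m) ^ n)
      = (Complex.exp (2 * Real.pi * Complex.I / m) ^ n)⁻¹ := by
  rw [map_pow, ← Complex.inv_eq_conj (omega_norm_one m hm), inv_pow]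

lemma Fmat_star_mul (hm : 0 < m) : star (Fmat m) * Fmat m = (m : ℂ) • 1 := by
  set ω := Complex.exp (2 * Real.pi * Complex.I / m) with hω
  ext a b
  rw [Matrix.star_eq_conjTranspose, Matrix.mul_apply]
  have hterm : ∀ i : Fin m, (Fmat m).conjTranspose a i * Fmat m i b
      = ((ω ^ (a : ℕ))⁻¹ * ω ^ (b : ℕ)) ^ (i : ℕ) := by
    intro i
    rw [Matrix.conjTranspose_apply]
    show (starRingEnd ℂ) (ω ^ ((i : ℕ) * (a : ℕ))) * ω ^ ((i : ℕ) * (b : ℕ)) = _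
    rw [conj_omega_pow m hm, pow_mul' ω, pow_mul' ω, ← inv_pow, ← mul_pow]
  rw [Finset.sum_congr rfl fun i _ => hterm i]
  rw [Fin.sum_univ_eq_sum_range (fun i => ((ω ^ (a : ℕ))⁻¹ * ω ^ (b : ℕ)) ^ i) m]
  have hzm : ((ω ^ (a : ℕ))⁻¹ * ω ^ (b : ℕ)) ^ m = 1 := by
    rw [mul_pow, inv_pow, ← pow_mul, ← pow_mul, mul_comm (a : ℕ) m, mul_comm (b : ℕ) m,
      pow_mul, pow_mul, (omega_prim m hm).pow_eq_one, one_pow, one_pow, inv_one, one_mul]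
  rw [my_root_sum hm hzm]
  have hiff : ((ω ^ (a : ℕ))⁻¹ * ω ^ (b : ℕ) = 1) ↔ a = b := by
    rw [inv_mul_eq_one₀ (pow_ne_zero _ (omega_ne_zero m))]
    exact (omega_pow_eq_iff m hm a b).trans (by tauto)
  by_cases hab : a = b
  · subst hab
    rw [if_pos (hiff.mpr rfl)]
    simp [Matrix.one_apply]
  · rw [if_neg (fun h => hab (hiff.mp h))]
    simp [Matrix.one_apply, hab]

lemma Fmat_mul_star (hm : 0 < m) : Fmat m * star (Fmat m) = (m : ℂ) • 1 := by
  set ω := Complex.exp (2 * Real.pi * Complex.I / m) with hω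
  ext a b
  rw [Matrix.star_eq_conjTranspose, Matrix.mul_apply]
  have hterm : ∀ i : Fin m, Fmat m a i * (Fmat m).conjTranspose i b
      = (ω ^ (a : ℕ) * (ω ^ (b : ℕ))⁻¹) ^ (i : ℕ) := by
    intro i
    rw [Matrix.conjTranspose_apply]
    show ω ^ ((a : ℕ) * (i : ℕ)) * (starRingEnd ℂ) (ω ^ ((b : ℕ) * (i : ℕ))) = _
    rw [conj_omega_pow m hm, pow_mul ω, pow_mul ω, ← inv_pow, ← mul_pow]
  rw [Finset.sum_congr rfl fun i _ => hterm i]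
  rw [Fin.sum_univ_eq_sum_range (fun i => (ω ^ (a : ℕ) * (ω ^ (b : ℕ))⁻¹) ^ i) m]
  have hzm : (ω ^ (a : ℕ) * (ω ^ (b : ℕ))⁻¹) ^ m = 1 := by
    rw [mul_pow, inv_pow, ← pow_mul, ← pow_mul, mul_comm (a : ℕ) m, mul_comm (b : ℕ) m,
      pow_mul, pow_mul, (omega_prim m hm).pow_eq_one, one_pow, one_pow, inv_one, mul_one]
  rw [my_root_sum hm hzm]
  have hiff : (ω ^ (a : ℕ) * (ω ^ (b : ℕ))⁻¹ = 1) ↔ a = b := by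
    rw [mul_inv_eq_one₀ (pow_ne_zero _ (omega_ne_zero m))]
    exact omega_pow_eq_iff m hm a b
  by_cases hab : a = b
  · subst hab
    rw [if_pos (hiff.mpr rfl)]
    simp [Matrix.one_apply]
  · rw [if_neg (fun h => hab (hiff.mp h))]
    simp [Matrix.one_apply, hab]

end DFT

variable {E : Type*} [NormedAddCommGroup E] [InnerProductSpace ℂ E] [CompleteSpace E]

lemma my_norm_apply_of_adj_comp {U : E →L[ℂ] E} {m : ℕ}
    (h : ContinuousLinearMap.adjoint U * U = (m : ℂ) • 1) (x : E) :
    ‖U x‖ = Real.sqrt m * ‖x‖ := by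
  have h1x : ContinuousLinearMap.adjoint U (U x) = (m : ℂ) • x := by
    have := congrArg (fun S : E →L[ℂ] E => S x) h
    simpa [ContinuousLinearMap.mul_apply] using this
  have hsq : ‖U x‖ ^ 2 = (m : ℝ) * ‖x‖ ^ 2 := by
    have h2 : (inner ℂ (U x) (U x) : ℂ) = (m : ℂ) * (inner ℂ x x : ℂ) := by
      rw [← ContinuousLinearMap.adjoint_inner_left, h1x, inner_smul_left]
      simp
    have h3 := congrArg (fun z : ℂ => RCLike.re z) h2
    rw [inner_self_eq_norm_sq (𝕜 := ℂ) (U x)] at h3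
    rw [h3]
    have hre : RCLike.re ((m : ℂ) * (inner ℂ x x : ℂ)) = (m : ℝ) * RCLike.re (inner ℂ x x : ℂ) := by
      simp [RCLike.mul_re]
    rw [hre, inner_self_eq_norm_sq (𝕜 := ℂ) x]
  have : ‖U x‖ = Real.sqrt ((m : ℝ) * ‖x‖ ^ 2) := by
    rw [← hsq, Real.sqrt_sq (norm_nonneg _)]
  rw [this, Real.sqrt_mul (Nat.cast_nonneg m), Real.sqrt_sq (norm_nonneg _)]

lemma my_norm_comp_left (U S : E →L[ℂ] E) {s : ℝ} (hs : 0 < s)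
    (hU : ∀ x, ‖U x‖ = s * ‖x‖) : ‖U * S‖ = s * ‖S‖ := by
  refine le_antisymm ?_ ?_
  · refine (U * S).opNorm_le_bound (by positivity) fun x => ?_
    rw [ContinuousLinearMap.mul_apply, hU, mul_assoc]
    exact mul_le_mul_of_nonneg_left (S.le_opNorm x) hs.le
  · have hb : ‖S‖ ≤ s⁻¹ * ‖U * S‖ := by
      refine S.opNorm_le_bound (by positivity) fun x => ?_
      have h1 : ‖S x‖ = s⁻¹ * ‖(U * S) x‖ := by
        rw [ContinuousLinearMap.mul_apply, hU, ← mul_assoc, inv_mul_cancel₀ hs.ne', one_mul]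
      rw [h1, mul_assoc]
      exact mul_le_mul_of_nonneg_left ((U * S).le_opNorm x) (by positivity)
    calc s * ‖S‖ ≤ s * (s⁻¹ * ‖U * S‖) := mul_le_mul_of_nonneg_left hb hs.le
      _ = ‖U * S‖ := by field_simp

lemma my_norm_comp_right (U S : E →L[ℂ] E) {s : ℝ} (hs : 0 < s)
    (hU : ∀ x, ‖(ContinuousLinearMap.adjoint U) x‖ = s * ‖x‖) : ‖S * U‖ = s * ‖S‖ := by
  have h1 : ‖S * U‖ = ‖ContinuousLinearMap.adjoint (S * U)‖ :=
    (ContinuousLinearMap.adjoint.norm_map (S * U)).symm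
  have h2 : ContinuousLinearMap.adjoint (S * U)
      = ContinuousLinearMap.adjoint U * ContinuousLinearMap.adjoint S := by
    rw [ContinuousLinearMap.mul_def, ContinuousLinearMap.adjoint_comp,
      ContinuousLinearMap.mul_def]
  rw [h1, h2, my_norm_comp_left _ _ hs hU, ContinuousLinearMap.adjoint.norm_map]

end AuxLemmas

/-- for an analytic polynomial kernel
`K(ζ,τ) = ∑_{0 ≤ j,k < m} c_{jk} ζ^j τ^k` and the integral operator `A = I_K` on `L²(𝕋)`
(with normalized Lebesgue measure), the operator norm of the `m × m` matrix
`{K(ξ,η)}_{ξ,η ∈ Π_m}` on Euclidean `ℂ^m` equals `m · ‖I_K‖`. -/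
theorem matrix_norm_eq_m_mul_intOp_norm (m : ℕ) (hm : 0 < m) (c : ℕ → ℕ → ℂ)
    (A : Lp ℂ 2 (haarAddCircle (T := 2 * Real.pi)) →L[ℂ]
         Lp ℂ 2 (haarAddCircle (T := 2 * Real.pi)))
    (hA : ∀ φ : Lp ℂ 2 (haarAddCircle (T := 2 * Real.pi)),
      A φ =ᵐ[haarAddCircle] fun x : AddCircle (2 * Real.pi) =>
        ∫ y : AddCircle (2 * Real.pi),
          (∑ j ∈ range m, ∑ k ∈ range m, c j k * fourier j x * fourier k y) * φ y
          ∂haarAddCircle) :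
    ‖Matrix.toEuclideanCLM (𝕜 := ℂ)
        (Matrix.of fun i i' : Fin m =>
          ∑ j ∈ range m, ∑ k ∈ range m,
            c j k * (Complex.exp (2 * Real.pi * Complex.I / m)) ^ ((i : ℕ) * j) *
              (Complex.exp (2 * Real.pi * Complex.I / m)) ^ ((i' : ℕ) * k))‖ =
      m * ‖A‖ := by
  classical
  -- orthonormal families
  have he : Orthonormal ℂ (fun j : Fin m => fourierLp (T := 2 * Real.pi) 2 ((j : ℕ) : ℤ)) := by
    exact orthonormal_fourier.comp (fun j : Fin m => ((j : ℕ) : ℤ))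
      (fun a b h => Fin.ext (Int.natCast_inj.mp h))
  have hf : Orthonormal ℂ (fun k : Fin m => fourierLp (T := 2 * Real.pi) 2 (-((k : ℕ) : ℤ))) := by
    exact orthonormal_fourier.comp (fun k : Fin m => (-((k : ℕ) : ℤ)))
      (fun a b h => Fin.ext (Int.natCast_inj.mp (neg_inj.mp h)))
  -- operator side
  have hnormA : ‖A‖ = ‖Matrix.toEuclideanCLM (𝕜 := ℂ)
      (Matrix.of fun j k : Fin m => c (j : ℕ) (k : ℕ))‖ :=
    my_opnorm_eq he hf (fun j k : Fin m => c (j : ℕ) (k : ℕ)) A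
      (fun φ => my_A_apply m c A hA φ)
  -- matrix side
  have hMeq : (Matrix.of fun i i' : Fin m =>
        ∑ j ∈ range m, ∑ k ∈ range m,
          c j k * (Complex.exp (2 * Real.pi * Complex.I / m)) ^ ((i : ℕ) * j) *
            (Complex.exp (2 * Real.pi * Complex.I / m)) ^ ((i' : ℕ) * k))
      = Fmat m * (Matrix.of fun j k : Fin m => c (j : ℕ) (k : ℕ)) * Fmat m := by
    ext i i'
    show (∑ j ∈ range m, ∑ k ∈ range m,
        c j k * (Complex.exp (2 * Real.pi * Complex.I / m)) ^ ((i : ℕ) * j) *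
          (Complex.exp (2 * Real.pi * Complex.I / m)) ^ ((i' : ℕ) * k)) = _
    calc (∑ j ∈ range m, ∑ k ∈ range m,
        c j k * (Complex.exp (2 * Real.pi * Complex.I / m)) ^ ((i : ℕ) * j) *
          (Complex.exp (2 * Real.pi * Complex.I / m)) ^ ((i' : ℕ) * k))
        = ∑ j : Fin m, ∑ k : Fin m,
            c (j : ℕ) (k : ℕ) * (Complex.exp (2 * Real.pi * Complex.I / m)) ^ ((i : ℕ) * (j : ℕ)) *
              (Complex.exp (2 * Real.pi * Complex.I / m)) ^ ((i' : ℕ) * (k : ℕ)) := by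
          rw [← Fin.sum_univ_eq_sum_range (fun j => ∑ k ∈ range m,
            c j k * (Complex.exp (2 * Real.pi * Complex.I / m)) ^ ((i : ℕ) * j) *
              (Complex.exp (2 * Real.pi * Complex.I / m)) ^ ((i' : ℕ) * k)) m]
          exact Finset.sum_congr rfl fun j _ =>
            (Fin.sum_univ_eq_sum_range (fun k =>
              c (j : ℕ) k * (Complex.exp (2 * Real.pi * Complex.I / m)) ^ ((i : ℕ) * (j : ℕ)) *
                (Complex.exp (2 * Real.pi * Complex.I / m)) ^ ((i' : ℕ) * k)) m).symm
      _ = ∑ k : Fin m, ∑ j : Fin m,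
            (Complex.exp (2 * Real.pi * Complex.I / m)) ^ ((i : ℕ) * (j : ℕ)) * c (j : ℕ) (k : ℕ) *
              (Complex.exp (2 * Real.pi * Complex.I / m)) ^ ((k : ℕ) * (i' : ℕ)) := by
          rw [Finset.sum_comm]
          exact Finset.sum_congr rfl fun k _ => Finset.sum_congr rfl fun j _ => by
            rw [mul_comm ((k : ℕ)) ((i' : ℕ))]; ring
      _ = (Fmat m * (Matrix.of fun j k : Fin m => c (j : ℕ) (k : ℕ)) * Fmat m) i i' := by
          rw [Matrix.mul_apply]
          refine Finset.sum_congr rfl fun k _ => ?_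
          rw [Matrix.mul_apply, Finset.sum_mul]
          rfl
  set TC := Matrix.toEuclideanCLM (𝕜 := ℂ)
    (Matrix.of fun j k : Fin m => c (j : ℕ) (k : ℕ)) with hTC
  set U := Matrix.toEuclideanCLM (𝕜 := ℂ) (Fmat m) with hU
  have hstar : ContinuousLinearMap.adjoint U
      = Matrix.toEuclideanCLM (𝕜 := ℂ) (star (Fmat m)) := by
    rw [← ContinuousLinearMap.star_eq_adjoint, hU, ← map_star]
  have hU1 : ContinuousLinearMap.adjoint U * U = ((m : ℕ) : ℂ) • 1 := by
    rw [hstar, hU, ← map_mul, Fmat_star_mul m hm, _root_.map_smul, map_one]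
  have hU2 : U * ContinuousLinearMap.adjoint U = ((m : ℕ) : ℂ) • 1 := by
    rw [hstar, hU, ← map_mul, Fmat_mul_star m hm, _root_.map_smul, map_one]
  have hUx : ∀ x, ‖U x‖ = Real.sqrt m * ‖x‖ := fun x => my_norm_apply_of_adj_comp hU1 x
  have hUax : ∀ x, ‖(ContinuousLinearMap.adjoint U) x‖ = Real.sqrt m * ‖x‖ := by
    intro x
    refine my_norm_apply_of_adj_comp ?_ x
    rw [ContinuousLinearMap.adjoint_adjoint]
    exact hU2
  have hs : (0 : ℝ) < Real.sqrt m := Real.sqrt_pos.mpr (by exact_mod_cast hm)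
  rw [hMeq, map_mul, map_mul, ← hU, ← hTC]
  rw [my_norm_comp_right U (U * TC) hs hUax, my_norm_comp_left U TC hs hUx,
    ← mul_assoc, Real.mul_self_sqrt (Nat.cast_nonneg m), hnormA]
end

section
/- Given any matrix {a_{ξη}}_{ξ,η ∈ Π_m} of complex numbers indexed by m-th roots of unity, there exists an analytic polynomial f in two variables of degree at most 2m−2 in each variable such that f(ξ,η) = a_{ξη} for all ξ,η ∈ Π_m and sup_{(z,w)∈𝕋²} |f(z,w)| ≤ max_{ξ,η ∈ Π_m} |a_{ξη}|. -/
open Complex Finset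

/-- The two-variable analytic polynomial of degree at most `2m−2` in each variable with
coefficients `c`. -/
noncomputable def poly2 (m : ℕ) (c : ℕ → ℕ → ℂ) (z w : ℂ) : ℂ :=
  ∑ s ∈ range (2 * m - 1), ∑ t ∈ range (2 * m - 1), c s t * z ^ s * w ^ t

/-- The square of the normalized geometric kernel `Υ_m(v)²`. -/
noncomputable def Ufun (m : ℕ) (v : ℂ) : ℂ := ((∑ k ∈ range m, v ^ k) / m) ^ 2

/-- number of ways to write `s = k + l` with `k, l < m`. -/
def Ncoef (m s : ℕ) : ℕ := ((range m ×ˢ range m).filter (fun p => p.1 + p.2 = s)).card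

lemma U_expand (m : ℕ) (hm : 0 < m) (v : ℂ) :
    Ufun m v = ∑ s ∈ range (2 * m - 1), ((Ncoef m s : ℂ) / (m : ℂ) ^ 2) * v ^ s := by
  have h1 : (∑ k ∈ range m, v ^ k) ^ 2 = ∑ p ∈ range m ×ˢ range m, v ^ (p.1 + p.2) := by
    rw [sq, Finset.sum_mul_sum, Finset.sum_product]
    simp [pow_add]
  have h2 : ∑ p ∈ range m ×ˢ range m, v ^ (p.1 + p.2)
      = ∑ s ∈ range (2 * m - 1), (Ncoef m s : ℂ) * v ^ s := by
    rw [← Finset.sum_fiberwise_of_maps_to (g := fun p : ℕ × ℕ => p.1 + p.2)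
      (t := range (2 * m - 1)) ?_ (fun p => v ^ (p.1 + p.2))]
    · refine Finset.sum_congr rfl fun s hs => ?_
      rw [Finset.sum_congr rfl (fun p hp => ?_), Finset.sum_const, nsmul_eq_mul]
      · rfl
      · rw [(Finset.mem_filter.mp hp).2]
    · intro p hp
      simp only [mem_product, mem_range] at hp ⊢
      omega
  rw [Ufun, div_pow, h1, h2, Finset.sum_div]
  refine Finset.sum_congr rfl fun s _ => ?_
  ring

lemma geom_zero (m : ℕ) (v : ℂ) (hv : v ≠ 1) (hvm : v ^ m = 1) :
    ∑ k ∈ range m, v ^ k = 0 := by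
  rw [geom_sum_eq hv, hvm, sub_self, zero_div]

lemma sum4_comm {α β γ δ M : Type*} [AddCommMonoid M] (A : Finset α) (B : Finset β)
    (C : Finset γ) (D : Finset δ) (f : α → β → γ → δ → M) :
    ∑ a ∈ A, ∑ b ∈ B, ∑ c ∈ C, ∑ d ∈ D, f a b c d
      = ∑ c ∈ C, ∑ d ∈ D, ∑ a ∈ A, ∑ b ∈ B, f a b c d := by
  rw [show (∑ a ∈ A, ∑ b ∈ B, ∑ c ∈ C, ∑ d ∈ D, f a b c d)
      = ∑ a ∈ A, ∑ c ∈ C, ∑ b ∈ B, ∑ d ∈ D, f a b c d from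
    Finset.sum_congr rfl fun a _ => Finset.sum_comm]
  rw [Finset.sum_comm]
  refine Finset.sum_congr rfl fun c _ => ?_
  rw [show (∑ a ∈ A, ∑ b ∈ B, ∑ d ∈ D, f a b c d)
      = ∑ a ∈ A, ∑ d ∈ D, ∑ b ∈ B, f a b c d from
    Finset.sum_congr rfl fun a _ => Finset.sum_comm]
  exact Finset.sum_comm

lemma aux_pow (x : ℂ) (p k l : ℕ) :
    ((x ^ p)⁻¹) ^ k * (x ^ p) ^ l = (x ^ l * (x ^ k)⁻¹) ^ p := by
  rw [mul_pow, inv_pow, inv_pow, ← pow_mul, ← pow_mul, ← pow_mul, ← pow_mul,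
    mul_comm p k, mul_comm p l, mul_comm]

/-- The absolute values of the translated kernels sum to `1` on the unit circle. -/
lemma sum_abs_Ufun (m : ℕ) (hm : 0 < m) (ω : ℂ) (hω : IsPrimitiveRoot ω m) (hω0 : ω ≠ 0)
    (hωm : ω ^ m = 1) (habsω : ∀ k : ℕ, ‖ω ^ k‖ = 1)
    (z : ℂ) (hz : ‖z‖ = 1) :
    ∑ p : Fin m, ‖Ufun m (z * (ω ^ (p : ℕ))⁻¹)‖ = 1 := by
  have hz0 : z ≠ 0 := by intro h; rw [h] at hz; simp at hz
  have hconj : ∀ p : Fin m, (starRingEnd ℂ) (∑ k ∈ range m, (z * (ω ^ (p : ℕ))⁻¹) ^ k)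
      = ∑ l ∈ range m, (z⁻¹ * ω ^ (p : ℕ)) ^ l := by
    intro p
    rw [map_sum]
    refine Finset.sum_congr rfl fun l _ => ?_
    rw [map_pow, map_mul]
    congr 1
    congr 1
    · rw [← Complex.inv_eq_conj (by exact hz)]
    · rw [map_inv₀, ← Complex.inv_eq_conj (habsω p), inv_inv]
  have hsum : ∑ p : Fin m,
      (Complex.normSq (∑ k ∈ range m, (z * (ω ^ (p : ℕ))⁻¹) ^ k) : ℂ) = (m : ℂ) ^ 2 := by
    have step1 : ∀ p : Fin m,
        (Complex.normSq (∑ k ∈ range m, (z * (ω ^ (p : ℕ))⁻¹) ^ k) : ℂ)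
          = ∑ k ∈ range m, ∑ l ∈ range m,
              (z ^ k * (z⁻¹) ^ l) * ((ω ^ l * (ω ^ k)⁻¹) ^ (p : ℕ)) := by
      intro p
      rw [← Complex.mul_conj, hconj, Finset.sum_mul_sum]
      refine Finset.sum_congr rfl fun k _ => Finset.sum_congr rfl fun l _ => ?_
      rw [mul_pow, mul_pow, ← aux_pow ω (p : ℕ) k l]
      ring
    calc ∑ p : Fin m, (Complex.normSq (∑ k ∈ range m, (z * (ω ^ (p : ℕ))⁻¹) ^ k) : ℂ)
        = ∑ p : Fin m, ∑ k ∈ range m, ∑ l ∈ range m,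
            (z ^ k * (z⁻¹) ^ l) * ((ω ^ l * (ω ^ k)⁻¹) ^ (p : ℕ)) :=
          Finset.sum_congr rfl fun p _ => step1 p
      _ = ∑ k ∈ range m, ∑ l ∈ range m,
            (z ^ k * (z⁻¹) ^ l) * ∑ p : Fin m, (ω ^ l * (ω ^ k)⁻¹) ^ (p : ℕ) := by
          rw [Finset.sum_comm]
          refine Finset.sum_congr rfl fun k _ => ?_
          rw [Finset.sum_comm]
          refine Finset.sum_congr rfl fun l _ => ?_
          rw [Finset.mul_sum]
      _ = ∑ k ∈ range m, ∑ l ∈ range m,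
            (z ^ k * (z⁻¹) ^ l) * (if l = k then (m : ℂ) else 0) := by
          refine Finset.sum_congr rfl fun k hk => Finset.sum_congr rfl fun l hl => ?_
          congr 1
          rw [Fin.sum_univ_eq_sum_range (fun i => (ω ^ l * (ω ^ k)⁻¹) ^ i) m]
          by_cases h : l = k
          · subst h
            rw [mul_inv_cancel₀ (pow_ne_zero _ hω0), if_pos rfl]
            simp
          · rw [if_neg h]
            have hvm : (ω ^ l * (ω ^ k)⁻¹) ^ m = 1 := by
              rw [mul_pow, inv_pow, ← pow_mul, ← pow_mul, mul_comm l m, mul_comm k m,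
                pow_mul, pow_mul, hωm, one_pow, one_pow, inv_one, mul_one]
            have hv1 : ω ^ l * (ω ^ k)⁻¹ ≠ 1 := by
              intro hc
              apply h
              have hlk : ω ^ l = ω ^ k := by field_simp at hc; exact hc
              exact hω.pow_inj (Finset.mem_range.mp hl) (Finset.mem_range.mp hk) hlk
            exact geom_zero m _ hv1 hvm
      _ = ∑ k ∈ range m, (z ^ k * (z⁻¹) ^ k) * (m : ℂ) := by
          refine Finset.sum_congr rfl fun k hk => ?_
          simp only [mul_ite, mul_zero]
          rw [Finset.sum_ite_eq' (range m) k (fun l => z ^ k * z⁻¹ ^ l * (m : ℂ)), if_pos hk]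
      _ = (m : ℂ) ^ 2 := by
          have : ∀ k, z ^ k * (z⁻¹) ^ k = 1 := by
            intro k
            rw [← mul_pow, mul_inv_cancel₀ hz0, one_pow]
          simp only [this, one_mul, Finset.sum_const, Finset.card_range, nsmul_eq_mul]
          ring
  have hsumR : ∑ p : Fin m,
      Complex.normSq (∑ k ∈ range m, (z * (ω ^ (p : ℕ))⁻¹) ^ k) = (m : ℝ) ^ 2 := by
    exact_mod_cast hsum
  have hUabs : ∀ v : ℂ, ‖Ufun m v‖
      = Complex.normSq (∑ k ∈ range m, v ^ k) / (m : ℝ) ^ 2 := by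
    intro v
    rw [Ufun, norm_pow, norm_div, Complex.norm_natCast, div_pow, Complex.sq_norm]
  simp only [hUabs]
  rw [← Finset.sum_div, hsumR, div_self (by positivity)]

/-- given `{a_{ξη}}_{ξ,η ∈ Π_m}` (with `Π_m` enumerated as `ξ_i = e^{2πii/m}`),
there is an analytic polynomial `f` in two variables of degree at most `2m−2` in each
variable with `f(ξ,η) = a_{ξη}` on `Π_m × Π_m` and `sup_{𝕋²} |f| ≤ max |a_{ξη}|`. -/
theorem exists_interpolating_poly2 (m : ℕ) (hm : 0 < m) (a : Fin m → Fin m → ℂ) :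
    ∃ c : ℕ → ℕ → ℂ,
      (∀ i j : Fin m,
        poly2 m c ((Complex.exp (2 * Real.pi * Complex.I / m)) ^ (i : ℕ))
          ((Complex.exp (2 * Real.pi * Complex.I / m)) ^ (j : ℕ)) = a i j) ∧
      (∀ z w : ℂ, ‖z‖ = 1 → ‖w‖ = 1 →
        ‖poly2 m c z w‖ ≤ ⨆ i, ⨆ j, ‖a i j‖) := by
  set ω := Complex.exp (2 * Real.pi * Complex.I / m) with hωdef
  have hω : IsPrimitiveRoot ω m := Complex.isPrimitiveRoot_exp m hm.ne'
  have hω0 : ω ≠ 0 := Complex.exp_ne_zero _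
  have hωm : ω ^ m = 1 := hω.pow_eq_one
  have habsω : ∀ k : ℕ, ‖ω ^ k‖ = 1 := by
    intro k
    have h1 : ‖ω‖ = 1 := by
      have := congrArg (‖·‖) hωm
      rw [norm_pow, norm_one] at this
      exact (pow_eq_one_iff_of_nonneg (norm_nonneg _) hm.ne').mp (by simpa using this)
    rw [norm_pow, h1, one_pow]
  have hUroot : ∀ i p : Fin m, Ufun m (ω ^ (i : ℕ) * (ω ^ (p : ℕ))⁻¹) = if i = p then 1 else 0 := by
    intro i p
    by_cases h : i = p
    · subst h
      rw [mul_inv_cancel₀ (pow_ne_zero _ hω0), if_pos rfl, Ufun]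
      simp only [one_pow, Finset.sum_const, Finset.card_range, nsmul_eq_mul, mul_one]
      rw [div_self (Nat.cast_ne_zero.mpr hm.ne'), one_pow]
    · rw [if_neg h, Ufun]
      have hvm : (ω ^ (i : ℕ) * (ω ^ (p : ℕ))⁻¹) ^ m = 1 := by
        rw [mul_pow, inv_pow, ← pow_mul, ← pow_mul, mul_comm (i : ℕ) m, mul_comm (p : ℕ) m,
          pow_mul, pow_mul, hωm, one_pow, one_pow, inv_one, mul_one]
      have hv1 : ω ^ (i : ℕ) * (ω ^ (p : ℕ))⁻¹ ≠ 1 := by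
        intro hc
        apply h
        have hip : ω ^ (i : ℕ) = ω ^ (p : ℕ) := by
          field_simp at hc
          exact hc
        exact Fin.ext (hω.pow_inj i.isLt p.isLt hip)
      rw [geom_zero m _ hv1 hvm, zero_div]
      norm_num
  have hrep : ∀ z w : ℂ, poly2 m (fun s t => ∑ p : Fin m, ∑ q : Fin m,
      a p q * (((Ncoef m s : ℂ) / (m : ℂ) ^ 2) * ((ω ^ (p : ℕ))⁻¹) ^ s)
        * (((Ncoef m t : ℂ) / (m : ℂ) ^ 2) * ((ω ^ (q : ℕ))⁻¹) ^ t)) z w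
      = ∑ p : Fin m, ∑ q : Fin m,
          a p q * Ufun m (z * (ω ^ (p : ℕ))⁻¹) * Ufun m (w * (ω ^ (q : ℕ))⁻¹) := by
    intro z w
    simp only [poly2, U_expand m hm, Finset.mul_sum, Finset.sum_mul, mul_pow]
    rw [sum4_comm]
    refine Finset.sum_congr rfl fun p _ => Finset.sum_congr rfl fun q _ => ?_
    rw [Finset.sum_comm]
    refine Finset.sum_congr rfl fun s _ => Finset.sum_congr rfl fun t _ => ?_
    ring
  refine ⟨fun s t => ∑ p : Fin m, ∑ q : Fin m,
      a p q * (((Ncoef m s : ℂ) / (m : ℂ) ^ 2) * ((ω ^ (p : ℕ))⁻¹) ^ s)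
        * (((Ncoef m t : ℂ) / (m : ℂ) ^ 2) * ((ω ^ (q : ℕ))⁻¹) ^ t), ?_, ?_⟩
  · -- interpolation
    intro i j
    rw [hrep]
    simp only [hUroot, mul_ite, ite_mul, mul_one, mul_zero, zero_mul, one_mul]
    simp [Finset.sum_ite_eq, Finset.mem_univ]
  · -- bound
    intro z w hz hw
    rw [hrep]
    haveI : Nonempty (Fin m) := ⟨⟨0, hm⟩⟩
    set M := ⨆ i, ⨆ j, ‖a i j‖ with hM
    have hMle : ∀ i j, ‖a i j‖ ≤ M := by
      intro i j
      refine le_trans (le_ciSup (f := fun j => ‖a i j‖)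
        (Set.Finite.bddAbove (Set.finite_range _)) j) ?_
      exact le_ciSup (f := fun i => ⨆ j, ‖a i j‖)
        (Set.Finite.bddAbove (Set.finite_range _)) i
    have hkz := sum_abs_Ufun m hm ω hω hω0 hωm habsω z hz
    have hkw := sum_abs_Ufun m hm ω hω hω0 hωm habsω w hw
    calc ‖∑ p : Fin m, ∑ q : Fin m,
            a p q * Ufun m (z * (ω ^ (p : ℕ))⁻¹) * Ufun m (w * (ω ^ (q : ℕ))⁻¹)‖
        ≤ ∑ p : Fin m, ‖∑ q : Fin m,
            a p q * Ufun m (z * (ω ^ (p : ℕ))⁻¹) * Ufun m (w * (ω ^ (q : ℕ))⁻¹)‖ :=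
          norm_sum_le _ _
      _ ≤ ∑ p : Fin m, ∑ q : Fin m, ‖
            a p q * Ufun m (z * (ω ^ (p : ℕ))⁻¹) * Ufun m (w * (ω ^ (q : ℕ))⁻¹)‖ :=
          Finset.sum_le_sum fun p _ => norm_sum_le _ _
      _ = ∑ p : Fin m, ∑ q : Fin m, ‖a p q‖
            * ‖Ufun m (z * (ω ^ (p : ℕ))⁻¹)‖
            * ‖Ufun m (w * (ω ^ (q : ℕ))⁻¹)‖ := by
          simp [norm_mul]
      _ ≤ ∑ p : Fin m, ∑ q : Fin m, M
            * ‖Ufun m (z * (ω ^ (p : ℕ))⁻¹)‖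
            * ‖Ufun m (w * (ω ^ (q : ℕ))⁻¹)‖ := by
          refine Finset.sum_le_sum fun p _ => Finset.sum_le_sum fun q _ => ?_
          have h2 : (0:ℝ) ≤ ‖Ufun m (z * (ω ^ (p : ℕ))⁻¹)‖ := norm_nonneg _
          have h3 : (0:ℝ) ≤ ‖Ufun m (w * (ω ^ (q : ℕ))⁻¹)‖ := norm_nonneg _
          exact mul_le_mul_of_nonneg_right (mul_le_mul_of_nonneg_right (hMle p q) h2) h3
      _ = M * (∑ p : Fin m, ‖Ufun m (z * (ω ^ (p : ℕ))⁻¹)‖)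
            * (∑ q : Fin m, ‖Ufun m (w * (ω ^ (q : ℕ))⁻¹)‖) := by
          simp only [Finset.sum_mul, Finset.mul_sum, mul_assoc]
          exact Finset.sum_comm
      _ = M := by rw [hkz, hkw, mul_one, mul_one]
end
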